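/- arXiv:2003.02399 — 3 statements merged into one kernel-verified Lean document; each statement's English description precedes it below -/
import Mathlib

section
/- There exists a universal constant C such that for every real A ≠ 1, the integral F(A) = ∫_{θ ∈ [-π,π), A + cos θ > 0} (A + cos θ)^{-1/2} dθ satisfies F(A) ≤ C(1 + ln(1 + 1/|A−1|)). -/
/-!
For `-1 < A < 1` put `b = arccos (-A)`: the integrand lives on `(-b, b)`, and writing
`cos θ - cos b = 2 sin ((b - |θ|) / 2) sin ((b + |θ|) / 2)`, Jordan's inequality gives
`A + cos θ ≥ π⁻² t max t d` with `t = b - |θ|` and `d = min b (π - b)`. For `A > 1` the same holds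
with `b = π` and `d = √(A - 1)`. Hence the integrand is at most `π (t max t d) ^ (-1/2)`, whose
integral over `t ∈ [0, 2b]` is `2 + log (1 + 2b / d)`: the square-root singularity at `t = 0`
costs `O(1)`, the `1/t` tail costs a logarithm. Finally `d ≳ √|A - 1|` unless `d = b`, so
`log (b / d) ≲ 1 + log (1 + 1 / |A - 1|)`.
-/

open Real MeasureTheory

open Set

theorem two_div_pi_mul_min_le_sin {x : ℝ} (hx₀ : 0 ≤ x) (hxπ : x ≤ π) :
    2 / π * min x (π - x) ≤ sin x := by
  rcases le_total x (π / 2) with h | h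
  · exact (mul_le_mul_of_nonneg_left (min_le_left _ _) (by positivity)).trans (mul_le_sin hx₀ h)
  · calc 2 / π * min x (π - x) ≤ 2 / π * (π - x) :=
          mul_le_mul_of_nonneg_left (min_le_right _ _) (by positivity)
      _ ≤ sin (π - x) := mul_le_sin (by linarith) (by linarith)
      _ = sin x := sin_pi_sub x

theorem sub_mul_max_le_cos_sub_cos {a b : ℝ} (ha : 0 ≤ a) (hab : a ≤ b) (hb : b ≤ π) :
    (b - a) * max (b - a) (min b (π - b)) ≤ π ^ 2 * (cos a - cos b) := by
  have hπ := pi_pos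
  have hdiff : b - a ≤ π * sin ((b - a) / 2) := by
    have := mul_le_sin (x := (b - a) / 2) (by linarith) (by linarith)
    rw [div_mul_div_comm, div_le_iff₀' (by positivity)] at this
    linarith
  have hmid : max (b - a) (min b (π - b)) ≤ π * sin ((a + b) / 2) := by
    have hm₁ := min_le_left b (π - b)
    have hm₂ := min_le_right b (π - b)
    have hmin : max (b - a) (min b (π - b)) / 2 ≤ min ((a + b) / 2) (π - (a + b) / 2) :=
      le_min (by rw [div_le_iff₀ two_pos]; exact max_le (by linarith) (by linarith))
        (by rw [div_le_iff₀ two_pos]; exact max_le (by linarith) (by linarith))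
    have := two_div_pi_mul_min_le_sin (x := (a + b) / 2) (by linarith) (by linarith)
    rw [div_mul_eq_mul_div, div_le_iff₀' hπ] at this
    linarith
  have hprod := mul_le_mul hdiff hmid (le_max_of_le_left (by linarith)) (by linarith)
  have hsin : 0 ≤ sin ((b - a) / 2) * sin ((a + b) / 2) :=
    mul_nonneg (sin_nonneg_of_nonneg_of_le_pi (by linarith) (by linarith))
      (sin_nonneg_of_nonneg_of_le_pi (by linarith) (by linarith))
  rw [cos_sub_cos, show (a - b) / 2 = -((b - a) / 2) by ring, sin_neg]
  nlinarith [mul_nonneg (sq_nonneg π) hsin]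

noncomputable def majorant (d t : ℝ) : ℝ := (t * max t d) ^ (-(1 / 2) : ℝ)

section Majorant

variable {d t : ℝ}

theorem majorant_nonneg (ht : 0 ≤ t) : 0 ≤ majorant d t :=
  rpow_nonneg (mul_nonneg ht (ht.trans (le_max_left t d))) _

theorem majorant_of_le (ht : 0 ≤ t) (htd : t ≤ d) :
    majorant d t = d ^ (-(1 / 2) : ℝ) * t ^ (-(1 / 2) : ℝ) := by
  rw [majorant, max_eq_right htd, mul_rpow ht (ht.trans htd), mul_comm]

theorem majorant_of_ge (hd : 0 ≤ d) (hdt : d ≤ t) : majorant d t = t⁻¹ := by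
  rw [majorant, max_eq_left hdt, ← sq, ← rpow_natCast, ← rpow_mul (hd.trans hdt)]
  norm_num [rpow_neg_one]

theorem rpow_neg_half_le_sqrt_mul_majorant {c x : ℝ} (hc : 0 < c) (ht : 0 < t)
    (h : t * max t d ≤ c * x) : x ^ (-(1 / 2) : ℝ) ≤ √c * majorant d t := by
  have hy : 0 < t * max t d := mul_pos ht (lt_max_of_lt_left ht)
  calc x ^ (-(1 / 2) : ℝ) ≤ (t * max t d / c) ^ (-(1 / 2) : ℝ) :=
        rpow_le_rpow_of_nonpos (div_pos hy hc) (by rwa [div_le_iff₀' hc]) (by norm_num)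
    _ = √c * majorant d t := by
        rw [div_rpow hy.le hc.le, rpow_neg hc.le, ← sqrt_eq_rpow, div_inv_eq_mul, majorant,
          mul_comm]

variable (hd : 0 < d)
include hd

theorem intervalIntegrable_majorant_zero_self : IntervalIntegrable (majorant d) volume 0 d :=
  ((intervalIntegral.intervalIntegrable_rpow' (r := -(1 / 2)) (by norm_num)).const_mul _).congr
    fun t ht => by
      rw [uIoc_of_le hd.le] at ht
      exact (majorant_of_le ht.1.le ht.2).symm

theorem integral_majorant_zero_self : ∫ t in (0 : ℝ)..d, majorant d t = 2 := by
  have hEq : EqOn (majorant d) (fun t => d ^ (-(1 / 2) : ℝ) * t ^ (-(1 / 2) : ℝ)) (uIcc 0 d) :=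
    fun t ht => by
      rw [uIcc_of_le hd.le] at ht
      exact majorant_of_le ht.1 ht.2
  rw [intervalIntegral.integral_congr hEq, intervalIntegral.integral_const_mul,
    integral_rpow (by norm_num), zero_rpow (by norm_num), sub_zero, mul_div_assoc', ← rpow_add hd]
  norm_num

theorem eqOn_majorant_inv {L : ℝ} (hL : 0 ≤ L) : EqOn (majorant d) (·⁻¹) (uIcc d (d + L)) :=
  fun t ht => by
    rw [uIcc_of_le (by linarith)] at ht
    exact majorant_of_ge hd.le ht.1

theorem intervalIntegrable_majorant_self_add {L : ℝ} (hL : 0 ≤ L) :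
    IntervalIntegrable (majorant d) volume d (d + L) := by
  refine (ContinuousOn.intervalIntegrable ?_).congr
    ((eqOn_majorant_inv hd hL).symm.mono uIoc_subset_uIcc)
  refine continuousOn_id.inv₀ fun t ht => ?_
  rw [uIcc_of_le (by linarith)] at ht
  exact (hd.trans_le ht.1).ne'

theorem integral_majorant_self_add {L : ℝ} (hL : 0 ≤ L) :
    ∫ t in d..d + L, majorant d t = log (1 + L / d) := by
  rw [intervalIntegral.integral_congr (eqOn_majorant_inv hd hL),
    integral_inv_of_pos hd (by linarith), add_div, div_self hd.ne']

theorem intervalIntegrable_majorant {L : ℝ} (hL : 0 ≤ L) :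
    IntervalIntegrable (majorant d) volume 0 L := by
  refine ((intervalIntegrable_majorant_zero_self hd).trans
    (intervalIntegrable_majorant_self_add hd hL)).mono_set ?_
  rw [uIcc_of_le hL, uIcc_of_le (by linarith)]
  exact Icc_subset_Icc le_rfl (by linarith)

theorem integral_majorant_le {L : ℝ} (hL : 0 ≤ L) :
    ∫ t in (0 : ℝ)..L, majorant d t ≤ 2 + log (1 + L / d) := by
  have h₁ := intervalIntegrable_majorant_zero_self hd
  have h₂ := intervalIntegrable_majorant_self_add hd hL
  calc ∫ t in (0 : ℝ)..L, majorant d t ≤ ∫ t in (0 : ℝ)..d + L, majorant d t :=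
        intervalIntegral.integral_mono_interval le_rfl hL (by linarith)
          (ae_restrict_of_forall_mem measurableSet_Ioc fun t ht => majorant_nonneg ht.1.le)
          (h₁.trans h₂)
    _ = 2 + log (1 + L / d) := by
        rw [← intervalIntegral.integral_add_adjacent_intervals h₁ h₂,
          integral_majorant_zero_self hd, integral_majorant_self_add hd hL]

end Majorant

theorem intervalIntegrable_comp_sub_comp_add {G : ℝ → ℝ} {b : ℝ}
    (hG : IntervalIntegrable G volume 0 (2 * b)) :
    IntervalIntegrable (fun θ => G (b - θ)) volume (-b) b ∧
      IntervalIntegrable (fun θ => G (b + θ)) volume (-b) b := by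
  have h₁ := (hG.comp_sub_left b).symm
  have h₂ := hG.comp_add_left b
  rw [sub_zero, show b - 2 * b = -b by ring] at h₁
  rw [zero_sub, show 2 * b - b = b by ring] at h₂
  exact ⟨h₁, h₂⟩

theorem integral_comp_sub_add_comp_add {G : ℝ → ℝ} {b : ℝ}
    (hG : IntervalIntegrable G volume 0 (2 * b)) :
    ∫ θ in -b..b, (G (b - θ) + G (b + θ)) = 2 * ∫ t in (0 : ℝ)..2 * b, G t := by
  obtain ⟨h₁, h₂⟩ := intervalIntegrable_comp_sub_comp_add hG
  rw [intervalIntegral.integral_add h₁ h₂, intervalIntegral.integral_comp_sub_left,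
    intervalIntegral.integral_comp_add_left, sub_neg_eq_add, sub_self, add_neg_cancel, ← two_mul,
    ← two_mul]

theorem setIntegral_Ioo_rpow_neg_half_le {φ : ℝ → ℝ} {b c d R : ℝ} (hb : 0 < b) (hc : 0 < c)
    (hd : 0 < d) (hR : b ≤ R * d)
    (hφ : ∀ θ ∈ Ioo (-b) b, (b - |θ|) * max (b - |θ|) d ≤ c * φ θ) :
    ∫ θ in Ioo (-b) b, φ θ ^ (-(1 / 2) : ℝ) ≤ 2 * √c * (2 + log (1 + 2 * R)) := by
  have hG := intervalIntegrable_majorant hd (L := 2 * b) (by positivity)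
  obtain ⟨hG₁, hG₂⟩ := intervalIntegrable_comp_sub_comp_add hG
  have hbound : ∀ θ ∈ Ioo (-b) b,
      φ θ ^ (-(1 / 2) : ℝ) ≤ √c * (majorant d (b - θ) + majorant d (b + θ)) := by
    intro θ hθ
    have hθ' : |θ| < b := abs_lt.2 hθ
    refine (rpow_neg_half_le_sqrt_mul_majorant hc (sub_pos.2 hθ') (hφ θ hθ)).trans ?_
    gcongr
    rcases abs_cases θ with ⟨h, _⟩ | ⟨h, _⟩ <;> rw [h]
    · linarith [majorant_nonneg (d := d) (t := b + θ) (by linarith)]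
    · rw [sub_neg_eq_add]
      linarith [majorant_nonneg (d := d) (t := b - θ) (by linarith)]
  have hpos : ∀ θ ∈ Ioo (-b) b, 0 ≤ φ θ ^ (-(1 / 2) : ℝ) := fun θ hθ => by
    have ht : 0 < b - |θ| := sub_pos.2 (abs_lt.2 hθ)
    have := (mul_pos ht (lt_max_of_lt_left ht)).trans_le (hφ θ hθ)
    exact rpow_nonneg (pos_of_mul_pos_right this hc.le).le _
  have hRd : 2 * b / d ≤ 2 * R := by rw [div_le_iff₀ hd]; linarith
  calc ∫ θ in Ioo (-b) b, φ θ ^ (-(1 / 2) : ℝ)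
      ≤ ∫ θ in Ioo (-b) b, √c * (majorant d (b - θ) + majorant d (b + θ)) :=
        integral_mono_of_nonneg (ae_restrict_of_forall_mem measurableSet_Ioo hpos)
          (((intervalIntegrable_iff_integrableOn_Ioo_of_le (by linarith)).1 (hG₁.add hG₂)).const_mul _)
          (ae_restrict_of_forall_mem measurableSet_Ioo hbound)
    _ = √c * (2 * ∫ t in (0 : ℝ)..2 * b, majorant d t) := by
        rw [integral_const_mul, ← integral_Ioc_eq_integral_Ioo,
          ← intervalIntegral.integral_of_le (by linarith), integral_comp_sub_add_comp_add hG]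
    _ ≤ √c * (2 * (2 + log (1 + 2 * R))) := by
        gcongr
        refine (integral_majorant_le hd (by positivity)).trans ?_
        gcongr
    _ = 2 * √c * (2 + log (1 + 2 * R)) := by ring

theorem setOf_eq_empty_of_le_neg_one {A : ℝ} (hA : A ≤ -1) :
    {θ : ℝ | θ ∈ Ico (-π) π ∧ 0 < A + cos θ} = ∅ :=
  eq_empty_of_forall_notMem fun θ hθ => by linarith [hθ.2, cos_le_one θ]

theorem setOf_eq_Ico_of_one_lt {A : ℝ} (hA : 1 < A) :
    {θ : ℝ | θ ∈ Ico (-π) π ∧ 0 < A + cos θ} = Ico (-π) π :=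
  sep_eq_self_iff_mem_true.2 fun θ _ => by linarith [neg_one_le_cos θ]

theorem setOf_eq_Ioo_arccos {A : ℝ} (h₁ : -1 < A) (h₂ : A < 1) :
    {θ : ℝ | θ ∈ Ico (-π) π ∧ 0 < A + cos θ} = Ioo (-arccos (-A)) (arccos (-A)) := by
  have hb : arccos (-A) < π := arccos_lt_pi.2 (by linarith)
  have hcos : ∀ θ, |θ| ≤ π → (0 < A + cos θ ↔ |θ| < arccos (-A)) := fun θ hθ => by
    rw [← cos_abs, ← strictAntiOn_cos.lt_iff_gt ⟨arccos_nonneg _, arccos_le_pi _⟩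
      ⟨abs_nonneg θ, hθ⟩, cos_arccos (by linarith) (by linarith)]
    constructor <;> intro <;> linarith
  ext θ
  simp only [mem_Ico, mem_Ioo, ← abs_lt]
  constructor
  · rintro ⟨hθ, hpos⟩
    exact (hcos θ (abs_le.2 ⟨hθ.1, hθ.2.le⟩)).1 hpos
  · intro hθ
    have := abs_lt.1 (hθ.trans hb)
    exact ⟨⟨this.1.le, this.2⟩, (hcos θ (hθ.trans hb).le).2 hθ⟩

theorem le_pi_mul_sqrt_mul {ε b d : ℝ} (hε : 0 < ε) (hb : b ≤ π) (hd : √ε ≤ d) :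
    b ≤ π * √(1 + 1 / ε) * d := by
  have : 1 ≤ √(1 + 1 / ε) * √ε := by
    rw [← sqrt_mul (by positivity), add_mul, one_div_mul_cancel hε.ne']
    exact one_le_sqrt.2 (by linarith)
  calc b ≤ π * (√(1 + 1 / ε) * √ε) := by nlinarith [pi_pos]
    _ ≤ π * √(1 + 1 / ε) * d := by rw [← mul_assoc]; gcongr

theorem integral_le_of_one_lt {A : ℝ} (hA : 1 < A) :
    ∫ θ in {θ : ℝ | θ ∈ Ico (-π) π ∧ 0 < A + cos θ}, (A + cos θ) ^ (-(1 / 2) : ℝ) ≤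
      2 * π * (2 + log (1 + 2 * (π * √(1 + 1 / |A - 1|)))) := by
  have hε : 0 < |A - 1| := abs_pos.2 (sub_ne_zero.2 hA.ne')
  rw [setOf_eq_Ico_of_one_lt hA, integral_Ico_eq_integral_Ioo]
  refine (setIntegral_Ioo_rpow_neg_half_le (c := π ^ 2) pi_pos (by positivity) (sqrt_pos.2 hε)
    (le_pi_mul_sqrt_mul hε le_rfl le_rfl) fun θ hθ => ?_).trans_eq (by rw [sqrt_sq pi_pos.le])
  have hθ' : |θ| ≤ π := (abs_lt.2 hθ).le
  have hcos := sub_mul_max_le_cos_sub_cos (abs_nonneg θ) hθ' le_rfl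
  rw [sub_self, min_eq_right pi_pos.le, max_eq_left (sub_nonneg.2 hθ'), cos_pi, cos_abs] at hcos
  have hsq : √|A - 1| ^ 2 = A - 1 := by rw [sq_sqrt hε.le, abs_of_pos (by linarith)]
  have hπ : 1 ≤ π ^ 2 := by nlinarith [pi_gt_three]
  rcases le_total (π - |θ|) √|A - 1| with h | h
  · rw [max_eq_right h]
    nlinarith [sub_nonneg.2 hθ']
  · rw [max_eq_left h]
    nlinarith [sub_nonneg.2 hθ']

theorem integral_le_of_lt_one {A : ℝ} (h₁ : -1 < A) (h₂ : A < 1) :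
    ∫ θ in {θ : ℝ | θ ∈ Ico (-π) π ∧ 0 < A + cos θ}, (A + cos θ) ^ (-(1 / 2) : ℝ) ≤
      2 * π * (2 + log (1 + 2 * (π * √(1 + 1 / |A - 1|)))) := by
  set b := arccos (-A)
  have hcos : cos b = -A := cos_arccos (by linarith) (by linarith)
  have hb₀ : 0 < b := arccos_pos.2 (by linarith)
  have hbπ : b < π := arccos_lt_pi.2 (by linarith)
  have hε : |A - 1| = 1 + cos b := by rw [hcos, abs_of_neg (by linarith)]; ring
  have hgap : √|A - 1| ≤ π - b := by
    have := one_sub_sq_div_two_le_cos (x := π - b)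
    rw [cos_pi_sub] at this
    exact sqrt_le_iff.2 ⟨by linarith, by linarith⟩
  have hR : b ≤ π * √(1 + 1 / |A - 1|) * min b (π - b) := by
    rcases min_cases b (π - b) with ⟨h, _⟩ | ⟨h, _⟩ <;> rw [h]
    · have : 1 ≤ π * √(1 + 1 / |A - 1|) :=
        one_le_mul_of_one_le_of_one_le (by linarith [pi_gt_three])
          (one_le_sqrt.2 (le_add_of_nonneg_right (by positivity)))
      nlinarith
    · exact le_pi_mul_sqrt_mul (abs_pos.2 (sub_ne_zero.2 h₂.ne)) hbπ.le hgap
  rw [setOf_eq_Ioo_arccos h₁ h₂]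
  refine (setIntegral_Ioo_rpow_neg_half_le (c := π ^ 2) hb₀ (by positivity)
    (lt_min hb₀ (by linarith)) hR fun θ hθ => ?_).trans_eq (by rw [sqrt_sq pi_pos.le])
  have := sub_mul_max_le_cos_sub_cos (abs_nonneg θ) (abs_lt.2 hθ).le hbπ.le
  rwa [cos_abs, hcos, sub_neg_eq_add, add_comm (cos θ)] at this

theorem two_pi_mul_two_add_log_le {ε : ℝ} (hε : 0 < ε) :
    2 * π * (2 + log (1 + 2 * (π * √(1 + 1 / ε)))) ≤
      2 * π * (2 + log (1 + 2 * π)) * (1 + log (1 + 1 / ε)) := by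
  have hπ := pi_pos
  have hy : 1 ≤ √(1 + 1 / ε) := one_le_sqrt.2 (le_add_of_nonneg_right (by positivity))
  have hL : 0 ≤ log (1 + 1 / ε) := log_nonneg (le_add_of_nonneg_right (by positivity))
  have hlog : log (1 + 2 * (π * √(1 + 1 / ε))) ≤ log (1 + 2 * π) + log (1 + 1 / ε) / 2 := by
    rw [← log_sqrt (by positivity), ← log_mul (by positivity) (by positivity)]
    exact log_le_log (by positivity) (by nlinarith)
  have hlog₀ : 0 ≤ log (1 + 2 * π) := log_nonneg (by linarith)
  nlinarith [mul_nonneg hL hlog₀]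

theorem stmt_1 :
    ∃ C : ℝ, ∀ A : ℝ, A ≠ 1 →
      ∫ θ in {θ : ℝ | θ ∈ Set.Ico (-π) π ∧ 0 < A + Real.cos θ},
        (A + Real.cos θ) ^ (-(1/2) : ℝ) ≤ C * (1 + Real.log (1 + 1 / |A - 1|)) := by
  refine ⟨2 * π * (2 + log (1 + 2 * π)), fun A hA => ?_⟩
  have hε : 0 < |A - 1| := abs_pos.2 (sub_ne_zero.2 hA)
  rcases le_or_gt A (-1) with hA₁ | hA₁
  · rw [setOf_eq_empty_of_le_neg_one hA₁, setIntegral_empty]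
    have hL := log_nonneg (le_add_of_nonneg_right (one_div_pos.2 hε).le)
    have hC := log_nonneg (by linarith [pi_pos] : (1 : ℝ) ≤ 1 + 2 * π)
    positivity
  refine le_trans ?_ (two_pi_mul_two_add_log_le hε)
  rcases hA.lt_or_gt with hA₂ | hA₂
  · exact integral_le_of_lt_one hA₁ hA₂
  · exact integral_le_of_one_lt hA₂
end

section
/- For all real s > 0, r > 0, γ > 0 and p with γ = p/2 − 1 (i.e. p > 2), one has r^{1/2}(1+s)^{(p−2)/2}(1 + γ ln(1+s+r)) ≤ (1+s+r)^{(p−1)/2}(1 + γ ln(1+s)). -/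
open Real

theorem stmt_8 (s r γ p : ℝ) (hs : 0 < s) (hr : 0 < r) (hγ : 0 < γ)
    (hgp : γ = p / 2 - 1) :
    r ^ ((1:ℝ)/2) * (1 + s) ^ ((p - 2) / 2) * (1 + γ * Real.log (1 + s + r)) ≤
      (1 + s + r) ^ ((p - 1) / 2) * (1 + γ * Real.log (1 + s)) := by
  have hγ2 : (p - 2) / 2 = γ := by linarith
  set a := 1 + s with ha
  set b := 1 + s + r with hb
  have ha0 : (0:ℝ) < a := by simp only [ha]; linarith
  have ha1 : (1:ℝ) < a := by simp only [ha]; linarith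
  have hb0 : (0:ℝ) < b := by simp only [hb]; linarith
  have hb1 : (1:ℝ) < b := by simp only [hb]; linarith
  have hab : a ≤ b := by simp only [ha, hb]; linarith
  have hla : 0 < Real.log a := Real.log_pos ha1
  have hlb : Real.log a ≤ Real.log b := Real.log_le_log ha0 hab
  have hd : 0 ≤ Real.log b - Real.log a := by linarith
  have hapos : 0 < a ^ γ := Real.rpow_pos_of_pos ha0 γ
  have key : a ^ γ * (1 + γ * (Real.log b - Real.log a)) ≤ b ^ γ := by
    have hexp : 1 + γ * (Real.log b - Real.log a) ≤ Real.exp (γ * (Real.log b - Real.log a)) := by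
      have := Real.add_one_le_exp (γ * (Real.log b - Real.log a)); linarith
    have hbγ : b ^ γ = a ^ γ * Real.exp (γ * (Real.log b - Real.log a)) := by
      rw [Real.rpow_def_of_pos hb0, Real.rpow_def_of_pos ha0, ← Real.exp_add]
      ring_nf
    rw [hbγ]
    nlinarith
  have step1 : a ^ γ * (1 + γ * Real.log b) ≤ b ^ γ * (1 + γ * Real.log a) := by
    have h2 : a ^ γ * (1 + γ * Real.log b) ≤
        a ^ γ * (1 + γ * (Real.log b - Real.log a)) * (1 + γ * Real.log a) := by
      have heq : a ^ γ * (1 + γ * (Real.log b - Real.log a)) * (1 + γ * Real.log a) -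
          a ^ γ * (1 + γ * Real.log b) =
          a ^ γ * (γ * γ * ((Real.log b - Real.log a) * Real.log a)) := by ring
      nlinarith [mul_nonneg hapos.le (mul_nonneg (mul_nonneg (mul_nonneg hγ.le hγ.le) hd) hla.le)]
    have h3 : (0:ℝ) ≤ 1 + γ * Real.log a := by positivity
    nlinarith
  have hr12 : r ^ ((1:ℝ)/2) ≤ b ^ ((1:ℝ)/2) := by
    apply Real.rpow_le_rpow hr.le (by simp only [hb]; linarith) (by norm_num)
  have hbsplit : b ^ ((p - 1) / 2) = b ^ ((1:ℝ)/2) * b ^ γ := by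
    rw [← Real.rpow_add hb0]
    congr 1; linarith
  rw [hγ2, hbsplit]
  have hlbpos : (0:ℝ) ≤ 1 + γ * Real.log b := by nlinarith [Real.log_pos hb1]
  calc r ^ ((1:ℝ)/2) * a ^ γ * (1 + γ * Real.log b)
      ≤ b ^ ((1:ℝ)/2) * (a ^ γ * (1 + γ * Real.log b)) := by
        rw [mul_assoc]
        exact mul_le_mul_of_nonneg_right hr12 (mul_nonneg hapos.le hlbpos)
    _ ≤ b ^ ((1:ℝ)/2) * (b ^ γ * (1 + γ * Real.log a)) := by
        apply mul_le_mul_of_nonneg_left step1 (by positivity)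
    _ = b ^ ((1:ℝ)/2) * b ^ γ * (1 + γ * Real.log a) := by ring
end

section
/- Let u : ℝ → ℝ be a continuously differentiable 2π-periodic function and q ≥ 1. Then (sup_{θ} |u(θ)|)^q − (inf_{θ} |u(θ)|)^q ≤ q · (∫_{-π}^{π} |u'(θ)|² dθ)^{1/2} · (∫_{-π}^{π} |u(θ)|^{2q−2} dθ)^{1/2}. -/
/-!
The extrema of the continuous periodic function `|u|` are attained, say at `x` and `y`, and by
periodicity `y` can be taken in `[x - 2π, x]`. The fundamental theorem of calculus gives
`|u x| ^ q - |u y| ^ q ≤ ∫ t in y..x, q * |u' t| * |u t| ^ (q - 1)` (for `q = 1` through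
`|u x| - |u y| ≤ |u x - u y|`, as `|u|` need not be differentiable), the integrand is nonnegative,
so the integral is at most the one over a whole period, and Cauchy–Schwarz bounds that.
-/

open Real MeasureTheory intervalIntegral

theorem Function.Periodic.deriv {𝕜 F : Type*} [NontriviallyNormedField 𝕜] [NormedAddCommGroup F]
    [NormedSpace 𝕜 F] {f : 𝕜 → F} {c : 𝕜} (h : Function.Periodic f c) :
    Function.Periodic (deriv f) c := fun x => by
  rw [← deriv_comp_add_const, h.funext]

section
variable {α : Type*} [ConditionallyCompleteLinearOrder α] [TopologicalSpace α] [OrderTopology α]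
  {f : ℝ → α} {c : ℝ}

theorem Function.Periodic.iSup_mem_range (h : Function.Periodic f c)
    (hc : c ≠ 0) (hf : Continuous f) : ⨆ x, f x ∈ Set.range f :=
  (h.compact_of_continuous hc hf).sSup_mem (Set.range_nonempty f)

theorem Function.Periodic.iInf_mem_range (h : Function.Periodic f c)
    (hc : c ≠ 0) (hf : Continuous f) : ⨅ x, f x ∈ Set.range f :=
  (h.compact_of_continuous hc hf).sInf_mem (Set.range_nonempty f)

end

theorem Function.Periodic.sub_le_integral_of_forall_sub_le_integral {g F : ℝ → ℝ} {c : ℝ}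
    (hg : Function.Periodic g c) (hc : 0 < c) (hF : Function.Periodic F c) (hF₀ : 0 ≤ F)
    (hFi : LocallyIntegrable F) (hgF : ∀ x y, y ≤ x → g x - g y ≤ ∫ t in y..x, F t)
    (x y a : ℝ) : g x - g y ≤ ∫ t in a..a + c, F t := by
  obtain ⟨y', hy', hgy⟩ := hg.exists_mem_Ico hc y (x - c)
  rw [sub_add_cancel] at hy'
  calc g x - g y = g x - g y' := by rw [hgy]
    _ ≤ ∫ t in y'..x, F t := hgF x y' hy'.2.le
    _ ≤ ∫ t in (x - c)..x, F t :=
      integral_mono_interval hy'.1 hy'.2.le le_rfl (Filter.Eventually.of_forall hF₀)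
        (hFi.integrableOn_isCompact isCompact_uIcc).intervalIntegrable
    _ = ∫ t in a..a + c, F t := by
      rw [← hF.intervalIntegral_add_eq (x - c) a, sub_add_cancel]

theorem abs_rpow_sub_abs_rpow_le_integral {u : ℝ → ℝ} (hu : ContDiff ℝ 1 u) {q : ℝ}
    (hq : 1 ≤ q) {x y : ℝ} (hyx : y ≤ x) :
    |u x| ^ q - |u y| ^ q ≤ ∫ t in y..x, q * (|deriv u t| * |u t| ^ (q - 1)) := by
  have hu' : Continuous (deriv u) := hu.continuous_deriv le_rfl
  have hF : Continuous fun t => q * (|deriv u t| * |u t| ^ (q - 1)) :=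
    continuous_const.mul <| hu'.abs.mul <|
      hu.continuous.abs.rpow_const fun _ => Or.inr (sub_nonneg.2 hq)
  rcases hq.eq_or_lt with rfl | hq
  · simp only [rpow_one, sub_self, rpow_zero, mul_one, one_mul]
    calc |u x| - |u y| ≤ |u x - u y| := abs_sub_abs_le_abs_sub _ _
      _ = |∫ t in y..x, deriv u t| := by
        rw [integral_deriv_eq_sub (fun t _ => hu.differentiable one_ne_zero t)
          (hu'.intervalIntegrable _ _)]
      _ ≤ ∫ t in y..x, |deriv u t| := abs_integral_le_integral_abs hyx
  · set g : ℝ → ℝ := fun t => |u t| ^ q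
    have hg : ContDiff ℝ 1 g := by simpa only [Real.norm_eq_abs] using hu.norm_rpow hq
    have hg' : ∀ t, |deriv g t| ≤ q * (|deriv u t| * |u t| ^ (q - 1)) := by
      intro t
      have := norm_fderiv_norm_rpow_le (hu.differentiable one_ne_zero) (x := t) hq
      simp only [Real.norm_eq_abs, ← norm_deriv_eq_norm_fderiv] at this
      linarith
    calc |u x| ^ q - |u y| ^ q = ∫ t in y..x, deriv g t :=
          (integral_deriv_eq_sub (fun t _ => hg.differentiable one_ne_zero t)
            ((hg.continuous_deriv le_rfl).intervalIntegrable _ _)).symm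
      _ ≤ ∫ t in y..x, q * (|deriv u t| * |u t| ^ (q - 1)) :=
        integral_mono_on hyx ((hg.continuous_deriv le_rfl).intervalIntegrable _ _)
          (hF.intervalIntegrable _ _) fun t _ => (le_abs_self _).trans (hg' t)

theorem intervalIntegral.integral_mul_le_L2_mul_L2_of_nonneg {f g : ℝ → ℝ} {a b : ℝ} (hab : a ≤ b)
    (hf : Continuous f) (hg : Continuous g) (hf₀ : 0 ≤ f) (hg₀ : 0 ≤ g) :
    ∫ t in a..b, f t * g t ≤
      (∫ t in a..b, f t ^ 2) ^ ((1:ℝ)/2) * (∫ t in a..b, g t ^ 2) ^ ((1:ℝ)/2) := by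
  have hL2 : ∀ h : ℝ → ℝ, Continuous h →
      MemLp h (ENNReal.ofReal 2) (volume.restrict (Set.Ioc a b)) := by
    intro h hh
    rw [ENNReal.ofReal_ofNat, memLp_two_iff_integrable_sq hh.aestronglyMeasurable]
    exact ((hh.pow 2).intervalIntegrable a b).1
  simp only [integral_of_le hab, ← rpow_two]
  exact integral_mul_le_Lp_mul_Lq_of_nonneg HolderConjugate.two_two
    (Filter.Eventually.of_forall hf₀) (Filter.Eventually.of_forall hg₀) (hL2 f hf) (hL2 g hg)

theorem stmt_12 (u : ℝ → ℝ) (hu : ContDiff ℝ 1 u) (hper : Function.Periodic u (2 * π))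
    (q : ℝ) (hq : 1 ≤ q) :
    (⨆ θ : ℝ, |u θ|) ^ q - (⨅ θ : ℝ, |u θ|) ^ q ≤
      q * (∫ θ in (-π)..π, |deriv u θ| ^ 2) ^ ((1:ℝ)/2) *
        (∫ θ in (-π)..π, |u θ| ^ (2 * q - 2)) ^ ((1:ℝ)/2) := by
  have hu' : Continuous (deriv u) := hu.continuous_deriv le_rfl
  have hper_abs : Function.Periodic (fun θ => |u θ|) (2 * π) := fun θ => by simp only [hper θ]
  obtain ⟨x, hx⟩ := hper_abs.iSup_mem_range two_pi_pos.ne' hu.continuous.abs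
  obtain ⟨y, hy⟩ := hper_abs.iInf_mem_range two_pi_pos.ne' hu.continuous.abs
  have hpow : Continuous fun θ => |u θ| ^ (q - 1) :=
    hu.continuous.abs.rpow_const fun _ => Or.inr (sub_nonneg.2 hq)
  have hosc := Function.Periodic.sub_le_integral_of_forall_sub_le_integral
    (g := fun θ => |u θ| ^ q) (F := fun θ => q * (|deriv u θ| * |u θ| ^ (q - 1)))
    (fun θ => by simp only [hper θ]) two_pi_pos
    (fun θ => by simp only [hper θ, hper.deriv θ])
    (fun θ => by positivity) (continuous_const.mul (hu'.abs.mul hpow)).locallyIntegrable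
    (fun _ _ => abs_rpow_sub_abs_rpow_le_integral hu hq) x y (-π)
  rw [show -π + 2 * π = π by ring, intervalIntegral.integral_const_mul] at hosc
  have hsq : ∀ θ, (|u θ| ^ (q - 1)) ^ 2 = |u θ| ^ (2 * q - 2) := fun θ => by
    rw [← rpow_natCast, ← rpow_mul (abs_nonneg _)]
    ring_nf
  calc (⨆ θ, |u θ|) ^ q - (⨅ θ, |u θ|) ^ q = |u x| ^ q - |u y| ^ q := by rw [← hx, ← hy]
    _ ≤ q * ∫ θ in (-π)..π, |deriv u θ| * |u θ| ^ (q - 1) := hosc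
    _ ≤ _ := by
      rw [mul_assoc]
      gcongr
      simpa only [hsq] using integral_mul_le_L2_mul_L2_of_nonneg (by linarith [pi_pos]) hu'.abs hpow
        (fun θ => abs_nonneg _) (fun θ => by positivity)
end
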